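/- arXiv:2512.09068 — 2 statements merged into one kernel-verified Lean document; each statement's English description precedes it below -/
import Mathlib

section
/- Let (X, d, μ) be a compact metric measure space with μ(X) = V < ∞, and let G: X × X → ℝ be a symmetric function (Green's function) such that for every Lipschitz function ρ: X → ℝ with Lipschitz constant 1 and every x ∈ X one has ρ(x) = (1/V)∫_X ρ dμ + ∫_X ⟨∇G(x,·), ∇ρ⟩ dμ, in the sense that the second term is bounded in absolute value by ∫_X |∇G(x,·)| dμ. Then the diameter of (X,d) satisfies diam(X) ≤ 2·sup_{x∈X} ∫_X |∇G(x,·)| dμ. -/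
open MeasureTheory

/-- Diameter bound from an L¹ gradient bound on the Green's function.  Here `G` is the
(symmetric) Green's function and `g x y` stands for `|∇G(x,·)|(y)`; the hypothesis `hrep`
is the Green representation formula
`ρ(x) = (1/V)∫ ρ dμ + ∫ ⟨∇G(x,·), ∇ρ⟩ dμ` for 1-Lipschitz `ρ`, in the sense that the
second term is bounded in absolute value by `∫ |∇G(x,·)| dμ`.  Then
`diam X ≤ 2 sup_x ∫ |∇G(x,·)| dμ`. -/
theorem stmt1 {X : Type*} [MetricSpace X] [CompactSpace X] [Nonempty X]
    [MeasurableSpace X] (μ : Measure X) [IsFiniteMeasure μ]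
    (G g : X → X → ℝ) (hsymm : ∀ x y, G x y = G y x)
    (hg : ∀ x y, 0 ≤ g x y)
    (hrep : ∀ ρ : X → ℝ, LipschitzWith 1 ρ → ∀ x : X,
      |ρ x - ((μ Set.univ).toReal)⁻¹ * ∫ y, ρ y ∂μ| ≤ ∫ y, g x y ∂μ)
    (B : ℝ) (hB : ∀ x, ∫ y, g x y ∂μ ≤ B) :
    Metric.diam (Set.univ : Set X) ≤ 2 * B := by
  have hB0 : 0 ≤ B := le_trans (integral_nonneg (hg (Classical.arbitrary X))) (hB _)
  apply Metric.diam_le_of_forall_dist_le (by linarith)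
  intro x _ y _
  have hlip : LipschitzWith 1 (fun z => dist x z) := LipschitzWith.dist_right x
  have h1 := hrep _ hlip x
  have h2 := hrep _ hlip y
  have h1' := le_trans h1 (hB x)
  have h2' := le_trans h2 (hB y)
  simp only [dist_self] at h1'
  rw [abs_sub_comm] at h1'
  have := abs_sub_abs_le_abs_sub (dist x y - ((μ Set.univ).toReal)⁻¹ * ∫ z, dist x z ∂μ)
    (0 - ((μ Set.univ).toReal)⁻¹ * ∫ z, dist x z ∂μ)
  rw [abs_le] at h1' h2'
  have := dist_nonneg (x := x) (y := y)
  linarith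
end

section
/- Let n ≥ 2 and let f(λ₁,…,λₙ) = Σⱼ arctan(λⱼ) on the region Γ = {λ ∈ ℝⁿ : Σⱼ arctan(λⱼ) > (n−1)π/2}. Then f is concave on Γ. -/
open Real

lemma arctan_concaveOn_Ici : ConcaveOn ℝ (Set.Ici (0:ℝ)) Real.arctan := by
  apply AntitoneOn.concaveOn_of_deriv (convex_Ici 0) Real.continuous_arctan.continuousOn
    (fun a _ => Real.differentiable_arctan.differentiableAt.differentiableWithinAt)
  intro a ha b hb hab
  rw [interior_Ici] at ha hb
  rw [Real.deriv_arctan]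
  have ha0 : (0:ℝ) < a := ha
  have h1 : (0:ℝ) < 1 + a ^ 2 := by positivity
  have h2 : 1 + a ^ 2 ≤ 1 + b ^ 2 := by nlinarith
  exact one_div_le_one_div_of_le h1 h2

lemma sum_concaveOn {n : ℕ} {O : Set (Fin n → ℝ)}
    (hO : Convex ℝ O) {g : Fin n → (Fin n → ℝ) → ℝ}
    (hg : ∀ j, ConcaveOn ℝ O (g j)) :
    ConcaveOn ℝ O (fun l => ∑ j, g j l) := by
  classical
  induction (Finset.univ : Finset (Fin n)) using Finset.cons_induction with
  | empty => simpa using concaveOn_const 0 hO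
  | cons a s ha ih =>
      simp only [Finset.sum_cons]
      exact (hg a).add ih

/-- Concavity of the dHYM operator on the supercritical branch:
`f(λ) = Σ arctan λⱼ` is concave on `Γ = {λ : Σ arctan λⱼ > (n−1)π/2}`
(which in particular is a convex set). -/
theorem stmt10 (n : ℕ) (hn : 2 ≤ n) :
    ConcaveOn ℝ {l : Fin n → ℝ | ((n : ℝ) - 1) * π / 2 < ∑ j, Real.arctan (l j)}
      (fun l => ∑ j, Real.arctan (l j)) := by
  classical
  set c : ℝ := ((n : ℝ) - 1) * π / 2 with hc
  set O : Set (Fin n → ℝ) := {l | ∀ j, 0 ≤ l j} with hO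
  have hOconv : Convex ℝ O := by
    intro x hx y hy a b ha hb hab j
    have h1 := hx j; have h2 := hy j
    show 0 ≤ a • x j + b • y j
    have : a • x j + b • y j = a * x j + b * y j := rfl
    rw [this]; positivity
  have hconc : ConcaveOn ℝ O (fun l => ∑ j, Real.arctan (l j)) := by
    apply sum_concaveOn hOconv
    intro j
    have h := arctan_concaveOn_Ici.comp_linearMap (LinearMap.proj (R := ℝ)
      (φ := fun _ : Fin n => ℝ) j)
    refine (h.subset ?_ hOconv)
    intro l hl
    exact hl j
  have hsub : {l : Fin n → ℝ | c < ∑ j, Real.arctan (l j)} ⊆ O := by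
    intro l hl j
    have hrest : ∑ i ∈ Finset.univ.erase j, Real.arctan (l i)
        < ∑ i ∈ Finset.univ.erase j, π / 2 := by
      apply Finset.sum_lt_sum_of_nonempty
      · rw [← Finset.card_pos, Finset.card_erase_of_mem (Finset.mem_univ j),
          Finset.card_univ, Fintype.card_fin]
        omega
      · intro i _
        exact Real.arctan_lt_pi_div_two _
    have hcard : ∑ i ∈ Finset.univ.erase j, (π / 2 : ℝ) = c := by
      rw [Finset.sum_const, Finset.card_erase_of_mem (Finset.mem_univ j),
        Finset.card_univ, Fintype.card_fin, nsmul_eq_mul, hc]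
      have h1 : (1:ℕ) ≤ n := by omega
      push_cast [Nat.cast_sub h1]
      ring
    have hsplit : Real.arctan (l j) + ∑ i ∈ Finset.univ.erase j, Real.arctan (l i)
        = ∑ i, Real.arctan (l i) :=
      Finset.add_sum_erase Finset.univ (fun i => Real.arctan (l i)) (Finset.mem_univ j)
    have hpos : 0 < Real.arctan (l j) := by
      have hl' : c < ∑ i, Real.arctan (l i) := hl
      linarith [hrest, hl', hsplit.symm ▸ hl']
    by_contra hneg
    push_neg at hneg
    have : Real.arctan (l j) < Real.arctan 0 := Real.arctan_strictMono hneg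
    rw [Real.arctan_zero] at this
    linarith
  have hset : {l : Fin n → ℝ | c < ∑ j, Real.arctan (l j)}
      = {x ∈ O | c < ∑ j, Real.arctan (x j)} := by
    ext l
    constructor
    · intro hl; exact ⟨hsub hl, hl⟩
    · intro hl; exact hl.2
  have hΓconv : Convex ℝ {l : Fin n → ℝ | c < ∑ j, Real.arctan (l j)} := by
    rw [hset]; exact hconc.convex_gt c
  exact hconc.subset hsub hΓconv
end
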